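/- Let 0 < δ < 1/2 and 0 < ε ≤ 1, and let X, X' be n×p real matrices that differ only in their first row, with Δ = X' − X ≠ 0. Consider the mechanism Y(X) = X + C where C is an n×p matrix of i.i.d. N(0, σ²) entries, and let S̄_{X,X'} = {y : p_{Y(X)}(y) > e^ε p_{Y(X')}(y)}. If σ ≥ (‖Δ‖ γ̄_δ / ε)·(1 + 1/(2 γ̄_δ²)), then P[Y(X) ∈ S̄_{X,X'}] ≤ δ, where γ̄_δ is the upper δ-quantile of N(0,1) and ‖·‖ is the Frobenius norm. -/

import Mathlib

/-!
Write `Δ = X - X'` and `C = y - X`. The log-likelihood ratio `log (p_X(y) / p_X'(y))` equals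
`(2 ⟪Δ, C⟫ + ‖Δ‖²) / (2σ²)`, so the event `Y(X) ∈ S̄` is the half-space event
`⟪Δ, C⟫ > (2σ²ε - ‖Δ‖²) / 2` for the linear statistic `⟪Δ, C⟫ ~ N(0, σ²‖Δ‖²)`. Its probability is
`P[Z > σε/‖Δ‖ - ‖Δ‖/(2σ)]`, and the calibration of `σ` makes this threshold at least `γ̄_δ`; this
uses `ε ≤ 1` and `γ̄_δ > 0`, the latter because `δ < 1/2 = P[Z > 0]`.
-/

open MeasureTheory ProbabilityTheory Real

noncomputable section

/-- The space of n×p real data matrices, represented as functions. -/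
abbrev Mat (n p : ℕ) := Fin n → Fin p → ℝ

/-- Frobenius (L₂) norm of a matrix. -/
def frob {n p : ℕ} (M : Mat n p) : ℝ := Real.sqrt (∑ i, ∑ j, (M i j) ^ 2)

/-- The distribution of an n×p matrix of i.i.d. N(0, σ²) entries. -/
def gaussNoise (n p : ℕ) (σ : ℝ) : Measure (Mat n p) :=
  Measure.pi fun _ => Measure.pi fun _ => gaussianReal 0 ⟨σ ^ 2, sq_nonneg σ⟩

/-- Matrix product. -/
def mdot {n p m : ℕ} (A : Fin n → Fin p → ℝ) (B : Fin p → Fin m → ℝ) :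
    Fin n → Fin m → ℝ := fun i j => ∑ k, A i k * B k j

/-- Matrix transpose. -/
def transp {n p : ℕ} (M : Mat n p) : Mat p n := fun j i => M i j

/-- Trace of a square matrix. -/
def trace' {n : ℕ} (T : Mat n n) : ℝ := ∑ i, T i i

/-- `A` is an orthogonal matrix: A Aᵀ = I. -/
def IsOrth {n : ℕ} (A : Mat n n) : Prop :=
  mdot A (transp A) = fun i j => if i = j then (1 : ℝ) else 0

/-- Neighboring data sets: they differ in only one row and the Frobenius
norm of the difference is at most 1. -/
def Neighbors {n p : ℕ} (X X' : Mat n p) : Prop :=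
  (∃ i, ∀ k, k ≠ i → X k = X' k) ∧ frob (X - X') ≤ 1

/-- `μ` is the Haar (uniform) probability distribution on the orthogonal group O(n):
a probability measure supported on orthogonal matrices that is invariant under
left translation by any orthogonal matrix. -/
def IsHaarOrth {n : ℕ} (μ : Measure (Mat n n)) : Prop :=
  IsProbabilityMeasure μ ∧ μ {A | IsOrth A}ᶜ = 0 ∧
    ∀ Q : Mat n n, IsOrth Q → μ.map (fun A => mdot Q A) = μ

/-- The density at `y` of the Gaussian mechanism `X + C`, where `C` has
i.i.d. N(0, σ²) entries: `(2πσ²)^{−np/2} exp(−‖y − X‖²/(2σ²))`. -/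
def gaussDens {n p : ℕ} (σ : ℝ) (X y : Mat n p) : ℝ :=
  (2 * π * σ ^ 2) ^ (-(n * p : ℝ) / 2) * Real.exp (-(frob (y - X) ^ 2) / (2 * σ ^ 2))
/-- The law of the mechanism `Y(X) = X + C` (setting (A)). -/
def lawA {n p : ℕ} (σ : ℝ) (X : Mat n p) : Measure (Mat n p) :=
  (gaussNoise n p σ).map (fun c => X + c)

open scoped NNReal ENNReal

namespace ProbabilityTheory

lemma pi_gaussianReal_map_sum {ι : Type*} [Fintype ι] (m : ι → ℝ) (v : ι → ℝ≥0) :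
    (Measure.pi fun i => gaussianReal (m i) (v i)).map (fun x => ∑ i, x i)
      = gaussianReal (∑ i, m i) (∑ i, v i) := by
  refine Measure.ext_of_charFun (funext fun t => ?_)
  simp only [charFun_map_sum_pi_eq_prod, Finset.prod_apply, charFun_gaussianReal,
    ← Complex.exp_sum]
  push_cast
  congr 1
  simp only [Finset.sum_sub_distrib, Finset.mul_sum, Finset.sum_mul, Finset.sum_div]

lemma pi_map_sum_eq_gaussianReal {ι : Type*} [Fintype ι] {X : ι → Type*}
    [∀ i, MeasurableSpace (X i)] {μ : ∀ i, Measure (X i)} {f : ∀ i, X i → ℝ}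
    (hf : ∀ i, Measurable (f i)) {m : ι → ℝ} {v : ι → ℝ≥0}
    (h : ∀ i, (μ i).map (f i) = gaussianReal (m i) (v i)) :
    (Measure.pi μ).map (fun x => ∑ i, f i (x i)) = gaussianReal (∑ i, m i) (∑ i, v i) := by
  have : ∀ i, SigmaFinite ((μ i).map (f i)) := fun i => by rw [h i]; infer_instance
  rw [← pi_gaussianReal_map_sum, ← funext h, ← Measure.pi_map_pi (fun i => (hf i).aemeasurable),
    Measure.map_map (by fun_prop) (by fun_prop)]
  rfl

lemma gaussianReal_Ioi_zero {v : ℝ≥0} (hv : v ≠ 0) : gaussianReal 0 v (Set.Ioi 0) = 2⁻¹ := by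
  have hsymm : gaussianReal 0 v (Set.Iio 0) = gaussianReal 0 v (Set.Ioi 0) := by
    conv_lhs => rw [← neg_zero, ← gaussianReal_map_neg]
    rw [Measure.map_apply measurable_neg measurableSet_Iio]
    congr 1
    ext x
    simp
  have := nullSingletonClass_gaussianReal (μ := 0) hv
  have hcompl := measure_add_measure_compl (μ := gaussianReal 0 v) (measurableSet_Iio (a := (0:ℝ)))
  rw [Set.compl_Iio, measure_congr Ioi_ae_eq_Ici.symm, hsymm, measure_univ] at hcompl
  rw [← two_mul, mul_comm] at hcompl
  exact ENNReal.eq_inv_of_mul_eq_one_left hcompl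

lemma pos_of_gaussianReal_Ioi_lt_half {v : ℝ≥0} (hv : v ≠ 0) {γ : ℝ}
    (h : gaussianReal 0 v (Set.Ioi γ) < 2⁻¹) : 0 < γ := by
  by_contra! hγ
  exact h.not_ge (gaussianReal_Ioi_zero hv ▸ measure_mono (Set.Ioi_subset_Ioi hγ))

end ProbabilityTheory

lemma mul_quantile_le_of_calibrated {D γ ε σ : ℝ} (hD : 0 < D) (hγ : 0 < γ) (hε0 : 0 < ε)
    (hε : ε ≤ 1) (hσ : D * γ / ε * (1 + 1 / (2 * γ ^ 2)) ≤ σ) :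
    σ * D * γ ≤ (2 * σ ^ 2 * ε - D ^ 2) / 2 := by
  have hσε : D * γ + D / (2 * γ) ≤ σ * ε := by
    have := mul_le_mul_of_nonneg_right hσ hε0.le
    rwa [show D * γ / ε * (1 + 1 / (2 * γ ^ 2)) * ε = D * γ + D / (2 * γ) by field_simp] at this
  have hDγ : D * γ ≤ σ := by
    refine le_trans ?_ hσ
    calc D * γ ≤ D * γ / ε := le_div_self (by positivity) hε0 hε
      _ ≤ _ := le_mul_of_one_le_right (by positivity) (le_add_of_nonneg_right (by positivity))
  have hσ0 : 0 < σ := (mul_pos hD hγ).trans_le hDγ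
  have hD2 : D ^ 2 ≤ σ * (D / γ) := by
    rw [mul_div_assoc', le_div_iff₀ hγ]
    nlinarith
  have h2σ := mul_le_mul_of_nonneg_left hσε (by positivity : 0 ≤ 2 * σ)
  calc σ * D * γ = (2 * σ * (D * γ + D / (2 * γ)) - σ * (D / γ)) / 2 := by field_simp; ring
    _ ≤ (2 * σ * (σ * ε) - D ^ 2) / 2 := by linarith
    _ = (2 * σ ^ 2 * ε - D ^ 2) / 2 := by ring

section GaussianMechanism

variable {n p : ℕ}

def frobInner (A B : Mat n p) : ℝ := ∑ i, ∑ j, A i j * B i j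

lemma frob_sq (M : Mat n p) : frob M ^ 2 = ∑ i, ∑ j, M i j ^ 2 :=
  Real.sq_sqrt (by positivity)

lemma frob_add_sq (A B : Mat n p) :
    frob (A + B) ^ 2 = frob A ^ 2 + 2 * frobInner A B + frob B ^ 2 := by
  simp only [frob_sq, frobInner, Pi.add_apply, Finset.mul_sum, ← Finset.sum_add_distrib]
  congr! 2 with i - j -
  ring

lemma frob_sub_comm (A B : Mat n p) : frob (A - B) = frob (B - A) := by
  unfold frob
  congr 1
  refine Finset.sum_congr rfl fun i _ => Finset.sum_congr rfl fun j _ => ?_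
  simp only [Pi.sub_apply]
  ring

lemma frob_pos {M : Mat n p} (hM : M ≠ 0) : 0 < frob M := by
  obtain ⟨i, j, hij⟩ : ∃ i j, M i j ≠ 0 := by
    by_contra! h
    exact hM (funext fun i => funext (h i))
  refine Real.sqrt_pos.2 ((sq_pos_iff.2 hij).trans_le ?_)
  calc M i j ^ 2 ≤ ∑ j', M i j' ^ 2 :=
        Finset.single_le_sum (f := fun j' => M i j' ^ 2) (fun _ _ => sq_nonneg _) (Finset.mem_univ j)
    _ ≤ ∑ i', ∑ j', M i' j' ^ 2 :=
        Finset.single_le_sum (f := fun i' => ∑ j', M i' j' ^ 2) (fun _ _ => by positivity)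
          (Finset.mem_univ i)

lemma measurable_frobInner (A : Mat n p) : Measurable (frobInner A) := by
  unfold frobInner; fun_prop

lemma pi_pi_gaussianReal_map_frobInner (v : ℝ≥0) (A : Mat n p) :
    (Measure.pi fun _ : Fin n => Measure.pi fun _ : Fin p => gaussianReal 0 v).map (frobInner A)
      = gaussianReal 0 (.mk (frob A ^ 2) (sq_nonneg _) * v) := by
  have hrow : ∀ i, (Measure.pi fun _ : Fin p => gaussianReal 0 v).map (fun r => ∑ j, A i j * r j)
      = gaussianReal 0 (∑ j, .mk (A i j ^ 2) (sq_nonneg _) * v) := fun i => by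
    simpa using pi_map_sum_eq_gaussianReal (m := fun _ => 0) (fun j => measurable_const_mul (A i j))
      (fun j => by rw [gaussianReal_map_const_mul, mul_zero])
  rw [show frobInner A = fun c => ∑ i, ∑ j, A i j * c i j from rfl,
    pi_map_sum_eq_gaussianReal (fun i => by fun_prop) hrow]
  congr 1
  · simp
  · apply NNReal.eq
    simp only [NNReal.coe_sum, NNReal.coe_mul, NNReal.coe_mk, frob_sq, Finset.sum_mul]

lemma gaussNoise_map_frobInner (σ : ℝ) (A : Mat n p) :
    (gaussNoise n p σ).map (frobInner A) = (gaussianReal 0 1).map (σ * frob A * ·) := by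
  rw [gaussianReal_map_const_mul, mul_zero]
  refine (pi_pi_gaussianReal_map_frobInner ⟨σ ^ 2, sq_nonneg σ⟩ A).trans
    (congrArg _ (NNReal.eq ?_))
  change frob A ^ 2 * σ ^ 2 = (σ * frob A) ^ 2 * 1
  ring

lemma exp_mul_gaussDens_lt_gaussDens_iff {σ : ℝ} (hσ : σ ≠ 0) (ε : ℝ) (X X' y : Mat n p) :
    exp ε * gaussDens σ X' y < gaussDens σ X y
      ↔ 2 * σ ^ 2 * ε < frob (y - X') ^ 2 - frob (y - X) ^ 2 := by
  have hK : 0 < (2 * π * σ ^ 2) ^ (-(n * p : ℝ) / 2) := by positivity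
  have h2σ : 0 < 2 * σ ^ 2 := by positivity
  rw [gaussDens, gaussDens, mul_left_comm, mul_lt_mul_iff_right₀ hK, ← exp_add, exp_lt_exp,
    ← sub_pos, show -frob (y - X) ^ 2 / (2 * σ ^ 2) - (ε + -frob (y - X') ^ 2 / (2 * σ ^ 2))
      = (frob (y - X') ^ 2 - frob (y - X) ^ 2 - 2 * σ ^ 2 * ε) / (2 * σ ^ 2) by
    field_simp; ring, div_pos_iff_of_pos_right h2σ, sub_pos]

lemma preimage_const_add_setOf_gaussDens_gt {σ : ℝ} (hσ : σ ≠ 0) (ε : ℝ) (X X' : Mat n p) :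
    (X + ·) ⁻¹' {y | gaussDens σ X y > exp ε * gaussDens σ X' y}
      = frobInner (X - X') ⁻¹' Set.Ioi ((2 * σ ^ 2 * ε - frob (X - X') ^ 2) / 2) := by
  ext c
  simp only [Set.mem_preimage, Set.mem_ofPred_eq, gt_iff_lt, Set.mem_Ioi,
    exp_mul_gaussDens_lt_gaussDens_iff hσ, add_sub_cancel_left,
    show X + c - X' = (X - X') + c by abel, frob_add_sq]
  constructor <;> intro h <;> linarith

end GaussianMechanism

theorem stmt8_general {n p : ℕ} (σ ε δ γ : ℝ)
    (hδ : δ < 1 / 2) (hε0 : 0 < ε) (hε : ε ≤ 1)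
    (hγ : gaussianReal 0 1 (Set.Ioi γ) = ENNReal.ofReal δ)
    (X X' : Mat n p)
    (hne : X ≠ X')
    (hσ : σ ≥ frob (X' - X) * γ / ε * (1 + 1 / (2 * γ ^ 2))) :
    lawA σ X {y | gaussDens σ X y > Real.exp ε * gaussDens σ X' y}
      ≤ ENNReal.ofReal δ := by
  set D := frob (X - X')
  have hD : 0 < D := frob_pos (sub_ne_zero.2 hne)
  have hγ0 : 0 < γ := pos_of_gaussianReal_Ioi_lt_half one_ne_zero <| by
    rw [hγ, ← ENNReal.ofReal_ofNat 2, ← ENNReal.ofReal_inv_of_pos two_pos,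
      ENNReal.ofReal_lt_ofReal_iff (by norm_num)]
    linarith
  rw [frob_sub_comm] at hσ
  have hthreshold := mul_quantile_le_of_calibrated hD hγ0 hε0 hε hσ
  have hσ0 : 0 < σ := lt_of_lt_of_le (by positivity) hσ
  rw [lawA, ← MeasurableEquiv.coe_addLeft, MeasurableEquiv.map_apply, MeasurableEquiv.coe_addLeft,
    preimage_const_add_setOf_gaussDens_gt hσ0.ne', ← Measure.map_apply (measurable_frobInner _) measurableSet_Ioi,
    gaussNoise_map_frobInner, Measure.map_apply (measurable_const_mul _) measurableSet_Ioi, ← hγ]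
  exact measure_mono fun z (hz : _ < σ * D * z) =>
    lt_of_mul_lt_mul_left (hthreshold.trans_lt hz) (mul_pos hσ0 hD).le

/-- Let `0 < δ < 1/2`, `0 < ε ≤ 1`, and let `X, X'` differ only in
their first row with `Δ = X' − X ≠ 0`. Consider `Y(X) = X + C` with `C` i.i.d.
N(0, σ²) entries and `S̄_{X,X'} = {y : p_{Y(X)}(y) > e^ε p_{Y(X')}(y)}`. If
`σ ≥ (‖Δ‖ γ̄_δ / ε)(1 + 1/(2γ̄_δ²))`, then `P[Y(X) ∈ S̄_{X,X'}] ≤ δ`, with `γ̄_δ` the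
upper δ-quantile of N(0,1). -/
theorem stmt8 {n p : ℕ} (hn : 0 < n) (σ ε δ γ : ℝ)
    (hδ0 : 0 < δ) (hδ : δ < 1 / 2) (hε0 : 0 < ε) (hε : ε ≤ 1)
    (hγ : gaussianReal 0 1 (Set.Ioi γ) = ENNReal.ofReal δ)
    (X X' : Mat n p)
    (hrow : ∀ k : Fin n, k ≠ ⟨0, hn⟩ → X k = X' k)
    (hne : X ≠ X')
    (hσ : σ ≥ frob (X' - X) * γ / ε * (1 + 1 / (2 * γ ^ 2))) :
    lawA σ X {y | gaussDens σ X y > Real.exp ε * gaussDens σ X' y}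
      ≤ ENNReal.ofReal δ :=
  stmt8_general σ ε δ γ hδ hε0 hε hγ X X' hne hσ
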